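/- arXiv:1803.03282 — 5 statements merged into one kernel-verified Lean document; each statement's English description precedes it below -/
import Mathlib

section
/- Let w be a k-Grassmannian permutation in W_n^{(k)}. Then the length of w equals the sum of the two associated partitions: ℓ(w) = Σ_{i=1}^{k} α_i + Σ_{i=1}^{r} λ_i. -/
/-- The hyperoctahedral group `W_n`: bijections `w : ℤ → ℤ` with `w (-i) = -w i`
and `w i = i` whenever `n < |i|`. -/
def SignedPerm (n : ℕ) (w : ℤ → ℤ) : Prop :=
  Function.Bijective w ∧ (∀ i : ℤ, w (-i) = -w i) ∧ (∀ i : ℤ, (n : ℤ) < |i| → w i = i)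

/-- The number of inversions `#{(i,j) : 1 ≤ i < j ≤ n, w i > w j}`. -/
noncomputable def invCount (n : ℕ) (w : ℤ → ℤ) : ℕ :=
  ((Finset.Icc (1 : ℤ) (n : ℤ) ×ˢ Finset.Icc (1 : ℤ) (n : ℤ)).filter
    (fun p => p.1 < p.2 ∧ w p.2 < w p.1)).card

/-- The length `ℓ(w) = inv(w) - Σ_{1 ≤ j ≤ n, w j < 0} w j`. -/
noncomputable def len (n : ℕ) (w : ℤ → ℤ) : ℤ :=
  (invCount n w : ℤ) - ∑ j ∈ (Finset.Icc (1 : ℤ) (n : ℤ)).filter (fun j => w j < 0), w j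

/-- `w` is `k`-Grassmannian: `0 < w 1 < ⋯ < w k` and `w (k+1) < ⋯ < w n`. -/
def Grassmannian (n k : ℕ) (w : ℤ → ℤ) : Prop :=
  SignedPerm n w ∧
  (∀ i : ℤ, 1 ≤ i → i ≤ (k : ℤ) → 0 < w i) ∧
  (∀ i j : ℤ, 1 ≤ i → i < j → j ≤ (k : ℤ) → w i < w j) ∧
  (∀ i j : ℤ, (k : ℤ) < i → i < j → j ≤ (n : ℤ) → w i < w j)

/-- A reflection of `W_n`: either the transposition pair `(i j)(-i -j)` with
`1 ≤ i < |j| ≤ n`, or the sign change `i ↔ -i` with `1 ≤ i ≤ n`. -/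
def IsReflection (n : ℕ) (t : ℤ → ℤ) : Prop :=
  (∃ i j : ℤ, 1 ≤ i ∧ i < |j| ∧ |j| ≤ (n : ℤ) ∧
    t = fun m => if m = i then j else if m = j then i
      else if m = -i then -j else if m = -j then -i else m) ∨
  (∃ i : ℤ, 1 ≤ i ∧ i ≤ (n : ℤ) ∧
    t = fun m => if m = i then -i else if m = -i then i else m)

/-- `w` covers `w'` in the Bruhat order: `w' = w ∘ t` for a reflection `t` and
`ℓ(w) = ℓ(w') + 1`. -/
def Covers (n : ℕ) (w w' : ℤ → ℤ) : Prop :=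
  ∃ t : ℤ → ℤ, IsReflection n t ∧ w' = w ∘ t ∧ len n w = len n w' + 1

/-- Multiset of entries of `w` at positions `1, …, k`. -/
noncomputable def entriesLow (k : ℕ) (w : ℤ → ℤ) : Multiset ℤ :=
  (Finset.Icc (1 : ℤ) (k : ℤ)).val.map w

/-- Multiset of entries of `w` at positions `k+1, …, n`. -/
noncomputable def entriesHigh (n k : ℕ) (w : ℤ → ℤ) : Multiset ℤ :=
  (Finset.Icc ((k : ℤ) + 1) (n : ℤ)).val.map w

/-- `d_i = #{j : λ_j > u_i}`, the number of negative entries of `w` at positions `> k`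
whose absolute value exceeds `w i`. -/
noncomputable def dcount (n k : ℕ) (w : ℤ → ℤ) (i : ℤ) : ℕ :=
  ((Finset.Icc ((k : ℤ) + 1) (n : ℤ)).filter (fun j => w j < 0 ∧ w i < -(w j))).card

/-- `μ_i = #{j : v_j > u_i}`, the number of positive entries of `w` at positions `> k`
exceeding `w i`. -/
noncomputable def mucount (n k : ℕ) (w : ℤ → ℤ) (i : ℤ) : ℕ :=
  ((Finset.Icc ((k : ℤ) + 1) (n : ℤ)).filter (fun j => 0 < w j ∧ w i < w j)).card

/-- `α_i = u_i - i + d_i`. -/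
noncomputable def alphaPart (n k : ℕ) (w : ℤ → ℤ) (i : ℤ) : ℤ :=
  w i - i + (dcount n k w i : ℤ)

/-- Pair of type B1: `w'` is obtained from `w` by replacing the entry `-1`
(at a position `> k`) by `1`. -/
def TypeB1 (n k : ℕ) (w w' : ℤ → ℤ) : Prop :=
  Grassmannian n k w ∧ Grassmannian n k w' ∧
  (-1 : ℤ) ∈ entriesHigh n k w ∧
  entriesLow k w' = entriesLow k w ∧
  entriesHigh n k w' = 1 ::ₘ (entriesHigh n k w).erase (-1)

/-- Pair of type B2: for some `a > 1`, `w'` is obtained from `w` by replacing the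
entries `-a` and `a-1` (at positions `> k`) by `-(a-1)` and `a`. -/
def TypeB2 (n k : ℕ) (w w' : ℤ → ℤ) : Prop :=
  Grassmannian n k w ∧ Grassmannian n k w' ∧
  ∃ a : ℤ, 1 < a ∧ (-a) ∈ entriesHigh n k w ∧ (a - 1) ∈ entriesHigh n k w ∧
    entriesLow k w' = entriesLow k w ∧
    entriesHigh n k w' =
      a ::ₘ (-(a - 1)) ::ₘ (((entriesHigh n k w).erase (-a)).erase (a - 1))

/-- Pair of type B3: for some `a > x > 0`, `w'` is obtained from `w` by exchanging
the entry `a` (at a position `≤ k`) with the entry `a - x` (at a position `> k`). -/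
def TypeB3 (n k : ℕ) (w w' : ℤ → ℤ) : Prop :=
  Grassmannian n k w ∧ Grassmannian n k w' ∧
  ∃ a x : ℤ, 0 < x ∧ x < a ∧
    a ∈ entriesLow k w ∧ (a - x) ∈ entriesHigh n k w ∧
    entriesLow k w' = (a - x) ::ₘ (entriesLow k w).erase a ∧
    entriesHigh n k w' = a ::ₘ (entriesHigh n k w).erase (a - x)

/-- Pair of type B4: for some `a > x > 0`, `w'` is obtained from `w` by replacing
the entry `a - x` (at a position `≤ k`) by `a` and the entry `-a` (at a position `> k`)
by `-(a-x)`. -/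
def TypeB4 (n k : ℕ) (w w' : ℤ → ℤ) : Prop :=
  Grassmannian n k w ∧ Grassmannian n k w' ∧
  ∃ a x : ℤ, 0 < x ∧ x < a ∧
    (a - x) ∈ entriesLow k w ∧ (-a) ∈ entriesHigh n k w ∧
    entriesLow k w' = a ::ₘ (entriesLow k w).erase (a - x) ∧
    entriesHigh n k w' = (-(a - x)) ::ₘ (entriesHigh n k w).erase (-a)

/-- The longest element `w₀` of `W_n^{(k)}`: `w₀ i = i` for `1 ≤ i ≤ k` and
`w₀ i = -(n + k + 1 - i)` for `k < i ≤ n` (extended to a signed permutation of `ℤ`). -/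
def w0 (n k : ℕ) : ℤ → ℤ := fun i =>
  if (k : ℤ) < i ∧ i ≤ (n : ℤ) then -((n : ℤ) + (k : ℤ) + 1 - i)
  else if -(n : ℤ) ≤ i ∧ i < -(k : ℤ) then (n : ℤ) + (k : ℤ) + 1 + i
  else i

/-- The simple reflection `s_i`: for `i = 0` the sign change `1 ↔ -1`, and for `i ≥ 1`
the swap `i ↔ i+1`, `-i ↔ -(i+1)`. -/
def simpleRefl (i : ℕ) : ℤ → ℤ :=
  if i = 0 then fun m => if m = 1 then -1 else if m = -1 then 1 else m
  else fun m =>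
    if m = (i : ℤ) then (i : ℤ) + 1 else if m = (i : ℤ) + 1 then (i : ℤ)
    else if m = -(i : ℤ) then -(i : ℤ) - 1 else if m = -(i : ℤ) - 1 then -(i : ℤ) else m

/-!
Both blocks `1, …, k` and `k + 1, …, n` of a Grassmannian `w` are increasing, so every
inversion pairs a position `i ≤ k` with a position `j > k`, and all negative entries lie in
the second block. For fixed `i`, put `u = w i`.
Since `j ↦ |w j|` permutes `{1, …, n}`, exactly `u` positions carry an entry of absolute
value at most `u`; `i` of them are the positions `1, …, i`, so `u - i` lie after `k`.
The remaining inversions at row `i` are the entries `-λ` with `λ > u`, counted by `d_i`.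
Hence row `i` contributes `α_i`, and the sign part of `ℓ(w)` is `Σ λ_j`.
-/

open Finset

namespace SignedPerm

variable {n : ℕ} {w : ℤ → ℤ}

lemma map_zero (hw : SignedPerm n w) : w 0 = 0 := by
  have := hw.2.1 0
  rw [neg_zero] at this
  omega

lemma abs_map_abs (hw : SignedPerm n w) (j : ℤ) : |w (|j|)| = |w j| := by
  rcases abs_choice j with h | h <;> rw [h]
  rw [hw.2.1, abs_neg]

lemma abs_map_mem_Icc (hw : SignedPerm n w) {j : ℤ} (hj : j ∈ Icc 1 (n : ℤ)) :
    |w j| ∈ Icc 1 (n : ℤ) := by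
  rw [mem_Icc] at hj ⊢
  constructor
  · refine Int.one_le_abs fun h => ?_
    have := hw.1.1 (h.trans hw.map_zero.symm)
    omega
  · by_contra! h
    have hfix := hw.1.1 (hw.2.2 _ h)
    rw [hfix, abs_of_pos (by omega)] at h
    omega

lemma injOn_abs_map (hw : SignedPerm n w) : Set.InjOn (fun j => |w j|) (Set.Ici 1) := by
  intro a ha b hb hab
  rw [Set.mem_Ici] at ha hb
  rcases abs_eq_abs.mp hab with h | h
  · exact hw.1.1 h
  · have := hw.1.1 (h.trans (hw.2.1 b).symm)
    omega

lemma card_filter_abs_map_le (hw : SignedPerm n w) {u : ℤ} (hu : u ≤ n) :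
    ((Icc 1 (n : ℤ)).filter (fun j => |w j| ≤ u)).card = (Icc 1 u).card := by
  refine card_nbij (fun j => |w j|) ?_ ?_ ?_
  · intro j hj
    rw [mem_coe, mem_filter] at hj
    exact mem_Icc.mpr ⟨(mem_Icc.mp (hw.abs_map_mem_Icc hj.1)).1, hj.2⟩
  · exact hw.injOn_abs_map.mono fun j hj => (mem_Icc.mp (mem_filter.mp hj).1).1
  · intro m hm
    rw [coe_Icc, Set.mem_Icc] at hm
    obtain ⟨j, hj⟩ := hw.1.2 m
    have hj0 : j ≠ 0 := by
      rintro rfl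
      rw [hw.map_zero] at hj
      omega
    have hjn : |j| ≤ n := by
      by_contra! h
      rw [hw.2.2 _ h] at hj
      rw [hj, abs_of_pos (by omega)] at h
      omega
    have hwj : |w (|j|)| = m := by rw [hw.abs_map_abs, hj, abs_of_pos (by omega)]
    refine ⟨|j|, ?_, hwj⟩
    rw [mem_coe, mem_filter, mem_Icc, hwj]
    exact ⟨⟨Int.one_le_abs hj0, hjn⟩, hm.2⟩

end SignedPerm

namespace Grassmannian

variable {n k : ℕ} {w : ℤ → ℤ}

lemma lt_of_map_neg (hw : Grassmannian n k w) {j : ℤ} (hj : 1 ≤ j) (hwj : w j < 0) :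
    (k : ℤ) < j := by
  by_contra! h
  have := hw.2.1 j hj h
  omega

lemma filter_map_neg (hw : Grassmannian n k w) :
    (Icc 1 (n : ℤ)).filter (fun j => w j < 0) =
      (Icc ((k : ℤ) + 1) n).filter (fun j => w j < 0) := by
  ext j
  simp only [mem_filter, mem_Icc]
  constructor
  · rintro ⟨⟨h1, h2⟩, h3⟩
    exact ⟨⟨hw.lt_of_map_neg h1 h3, h2⟩, h3⟩
  · rintro ⟨⟨h1, h2⟩, h3⟩
    exact ⟨⟨by omega, h2⟩, h3⟩

lemma invCount_eq_sum (hw : Grassmannian n k w) :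
    invCount n w =
      ∑ i ∈ Icc 1 (k : ℤ), ((Icc ((k : ℤ) + 1) n).filter (fun j => w j < w i)).card := by
  have hinv : ((Icc 1 (n : ℤ) ×ˢ Icc 1 (n : ℤ)).filter (fun p => p.1 < p.2 ∧ w p.2 < w p.1))
      = (Icc 1 (k : ℤ) ×ˢ Icc ((k : ℤ) + 1) n).filter (fun p => w p.2 < w p.1) := by
    ext ⟨i, j⟩
    simp only [mem_filter, mem_product, mem_Icc]
    constructor
    · rintro ⟨⟨⟨hi1, -⟩, -, hjn⟩, hij, hlt⟩
      have hik : i ≤ k := by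
        by_contra! h
        exact absurd (hw.2.2.2 i j h hij hjn) (by omega)
      have hkj : k < j := by
        by_contra! h
        exact absurd (hw.2.2.1 i j hi1 hij h) (by omega)
      exact ⟨⟨⟨hi1, hik⟩, hkj, hjn⟩, hlt⟩
    · rintro ⟨⟨⟨hi1, hik⟩, hkj, hjn⟩, hlt⟩
      exact ⟨⟨⟨hi1, by omega⟩, by omega, hjn⟩, by omega, hlt⟩
  rw [invCount, hinv, card_filter, sum_product]
  exact sum_congr rfl fun i _ => (card_filter _ _).symm

lemma filter_low_abs_map_le (hw : Grassmannian n k w) {i : ℤ} (hi : i ∈ Icc 1 (k : ℤ)) :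
    (Icc 1 (k : ℤ)).filter (fun j => |w j| ≤ w i) = Icc 1 i := by
  rw [mem_Icc] at hi
  ext j
  simp only [mem_filter, mem_Icc]
  constructor
  · rintro ⟨⟨hj1, hjk⟩, hle⟩
    refine ⟨hj1, le_of_not_gt fun hij => ?_⟩
    have := hw.2.2.1 i j hi.1 hij hjk
    rw [abs_of_pos (hw.2.1 j hj1 hjk)] at hle
    omega
  · rintro ⟨hj1, hji⟩
    refine ⟨⟨hj1, by omega⟩, ?_⟩
    rw [abs_of_pos (hw.2.1 j hj1 (by omega))]
    rcases hji.lt_or_eq with h | rfl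
    · exact (hw.2.2.1 j i hj1 h hi.2).le
    · exact le_rfl

lemma card_filter_high_abs_map_le (hw : Grassmannian n k w) (hk : k ≤ n) {i : ℤ}
    (hi : i ∈ Icc 1 (k : ℤ)) :
    (((Icc ((k : ℤ) + 1) n).filter (fun j => |w j| ≤ w i)).card : ℤ) = w i - i := by
  have hik := mem_Icc.mp hi
  have hwi := hw.2.1 i hik.1 hik.2
  have hu : w i ≤ n := by
    have := mem_Icc.mp (hw.1.abs_map_mem_Icc (mem_Icc.mpr ⟨hik.1, by omega⟩))
    rw [abs_of_pos hwi] at this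
    exact this.2
  have hKH : Icc 1 (n : ℤ) = Icc 1 (k : ℤ) ∪ Icc ((k : ℤ) + 1) n := by
    ext j
    simp only [mem_union, mem_Icc]
    omega
  have hKH_disj : Disjoint (Icc 1 (k : ℤ)) (Icc ((k : ℤ) + 1) n) :=
    disjoint_left.mpr fun j h1 h2 => by
      rw [mem_Icc] at h1 h2
      omega
  have hcount := hw.1.card_filter_abs_map_le hu
  rw [hKH, filter_union, card_union_of_disjoint (disjoint_filter_filter hKH_disj),
    hw.filter_low_abs_map_le hi] at hcount
  have hcount' := congrArg (Nat.cast : ℕ → ℤ) hcount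
  push_cast [Int.card_Icc] at hcount'
  omega

lemma card_filter_high_lt (hw : Grassmannian n k w) (hk : k ≤ n) {i : ℤ}
    (hi : i ∈ Icc 1 (k : ℤ)) :
    (((Icc ((k : ℤ) + 1) n).filter (fun j => w j < w i)).card : ℤ) = alphaPart n k w i := by
  rw [mem_Icc] at hi
  have hwi := hw.2.1 i hi.1 hi.2
  have hsplit : (Icc ((k : ℤ) + 1) n).filter (fun j => w j < w i)
      = (Icc ((k : ℤ) + 1) n).filter (fun j => |w j| ≤ w i) ∪
        (Icc ((k : ℤ) + 1) n).filter (fun j => w j < 0 ∧ w i < -w j) := by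
    rw [← filter_or]
    refine filter_congr fun j hj => ?_
    have hne : w j ≠ w i := fun h => by
      have := hw.1.1.1 h
      rw [mem_Icc] at hj
      omega
    rw [abs_le]
    omega
  have hdisj : Disjoint ((Icc ((k : ℤ) + 1) n).filter (fun j => |w j| ≤ w i))
      ((Icc ((k : ℤ) + 1) n).filter (fun j => w j < 0 ∧ w i < -w j)) :=
    disjoint_filter.mpr fun j _ h1 h2 => by
      have := abs_le.mp h1
      omega
  rw [hsplit, card_union_of_disjoint hdisj, Nat.cast_add,
    hw.card_filter_high_abs_map_le hk (mem_Icc.mpr hi), alphaPart, dcount]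

end Grassmannian

theorem stmt_1_general (n k : ℕ) (hk : k ≤ n) (w : ℤ → ℤ)
    (hw : Grassmannian n k w) :
    len n w = (∑ i ∈ Finset.Icc (1 : ℤ) (k : ℤ), alphaPart n k w i) +
      ∑ j ∈ (Finset.Icc ((k : ℤ) + 1) (n : ℤ)).filter (fun j => w j < 0), (-(w j)) := by
  rw [len, hw.filter_map_neg, hw.invCount_eq_sum, sum_neg_distrib, Nat.cast_sum,
    sum_congr rfl fun i hi => hw.card_filter_high_lt hk hi]
  ring

/-- `ℓ(w) = Σ_{i=1}^{k} α_i + Σ_{i=1}^{r} λ_i`. -/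
theorem stmt_1 (n k : ℕ) (hn : 1 ≤ n) (hk : k ≤ n) (w : ℤ → ℤ)
    (hw : Grassmannian n k w) :
    len n w = (∑ i ∈ Finset.Icc (1 : ℤ) (k : ℤ), alphaPart n k w i) +
      ∑ j ∈ (Finset.Icc ((k : ℤ) + 1) (n : ℤ)).filter (fun j => w j < 0), (-(w j)) :=
  stmt_1_general n k hk w hw
end

section
/- Let w ∈ W_n^{(k)} and let a > 1 be an integer such that both −a and a−1 are entries of w at positions > k. Then the permutation w' obtained from w by replacing the entries −a and a−1 by −(a−1) and a respectively among positions > k (and reordering increasingly) belongs to W_n^{(k)}, and w covers w'. -/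
/-! Let `w p = -a` and `w q = a - 1` with `k < p < q`, and let `t` be the reflection exchanging
`p ↔ -q` (and `-p ↔ q`). At positive positions `w ∘ t` is `w` followed by the value map raising
`-a` and `a - 1` by one. Since `w` is a signed permutation, the targets `-(a - 1)` and `a` are not
values of `w` at positive positions, so this map is strictly monotone on those values: the
Grassmannian conditions and the inversions are unchanged, while the sum of the negative entries
grows by exactly one. -/

open Finset

lemma SignedPerm.comp {n : ℕ} {w t : ℤ → ℤ} (hw : SignedPerm n w) (ht : SignedPerm n t) :
    SignedPerm n (w ∘ t) :=
  ⟨hw.1.comp ht.1, fun i => by simp [ht.2.1, hw.2.1],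
    fun i hi => by simp [ht.2.2 i hi, hw.2.2 i hi]⟩

lemma SignedPerm.apply_ne_neg_apply {n : ℕ} {w : ℤ → ℤ} (hw : SignedPerm n w) {m p : ℤ}
    (hm : 0 < m) (hp : 0 < p) : w m ≠ -w p := by
  rw [← hw.2.1]
  intro h
  have := hw.1.1 h
  omega

def signedTransposition (i j : ℤ) : ℤ → ℤ := fun m =>
  if m = i then j else if m = j then i else if m = -i then -j else if m = -j then -i else m

lemma isReflection_signedTransposition {n : ℕ} {i j : ℤ} (hi : 1 ≤ i) (hij : i < |j|)
    (hj : |j| ≤ n) : IsReflection n (signedTransposition i j) :=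
  Or.inl ⟨i, j, hi, hij, hj, rfl⟩

lemma signedPerm_signedTransposition {n : ℕ} {i j : ℤ} (hi : 1 ≤ i) (hij : i < |j|)
    (hj : |j| ≤ n) : SignedPerm n (signedTransposition i j) := by
  obtain ⟨hj₁, hj₂⟩ := abs_le.1 hj
  have hij' := lt_abs.1 hij
  have hinv : Function.Involutive (signedTransposition i j) := by
    intro m
    unfold signedTransposition
    split_ifs <;> omega
  refine ⟨hinv.bijective, fun m => ?_, fun m hm => ?_⟩ <;> unfold signedTransposition
  · split_ifs <;> omega
  · have hm' := lt_abs.1 hm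
    split_ifs <;> omega

lemma signedTransposition_apply_of_lt {i j m : ℤ} (hm : 0 ≤ m) (hi : m < i) (hj : m < |j|) :
    signedTransposition i j m = m := by
  have := lt_abs.1 hj
  unfold signedTransposition
  split_ifs <;> omega

def raisePair (a x : ℤ) : ℤ :=
  if x = -a ∨ x = a - 1 then x + 1 else x

lemma raisePair_neg_self (a : ℤ) : raisePair a (-a) = -(a - 1) := by
  rw [raisePair, if_pos (Or.inl rfl)]
  ring

lemma raisePair_sub_one (a : ℤ) : raisePair a (a - 1) = a := by
  rw [raisePair, if_pos (Or.inr rfl)]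
  ring

lemma raisePair_of_ne {a x : ℤ} (h₁ : x ≠ -a) (h₂ : x ≠ a - 1) : raisePair a x = x :=
  if_neg (not_or.2 ⟨h₁, h₂⟩)

lemma raisePair_neg_iff {a : ℤ} (ha : 1 < a) (x : ℤ) : raisePair a x < 0 ↔ x < 0 := by
  unfold raisePair
  split_ifs <;> omega

lemma le_raisePair (a x : ℤ) : x ≤ raisePair a x := by
  unfold raisePair
  split_ifs <;> omega

lemma strictMonoOn_ite_add_one {P : ℤ → Prop} [DecidablePred P] {D : Set ℤ}
    (h : ∀ x ∈ D, P x → x + 1 ∉ D) : StrictMonoOn (fun x => if P x then x + 1 else x) D := by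
  intro x hx y hy hxy
  dsimp only
  by_cases hPx : P x
  · have hyx : y ≠ x + 1 := fun hyx => h x hx hPx (hyx ▸ hy)
    split_ifs <;> omega
  · split_ifs <;> omega

section SignedPerm

variable {n : ℕ} {w : ℤ → ℤ} {a p q : ℤ}

lemma strictMonoOn_raisePair (hw : SignedPerm n w) (hp : 0 < p) (hq : 0 < q) (hwp : w p = -a)
    (hwq : w q = a - 1) : StrictMonoOn (raisePair a) (w '' Set.Ici 1) := by
  refine strictMonoOn_ite_add_one ?_
  rintro _ ⟨m, hm, rfl⟩ hm' ⟨m', hm'', hmm'⟩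
  rw [Set.mem_Ici] at hm hm''
  rcases hm' with h | h
  · exact hw.apply_ne_neg_apply (m := m') (p := q) (by omega) hq (by rw [hmm', h, hwq]; ring)
  · exact hw.apply_ne_neg_apply (m := m') (p := p) (by omega) hp (by rw [hmm', h, hwp]; ring)

lemma comp_signedTransposition_eqOn (hw : SignedPerm n w) (hp : 0 < p)
    (hq : 0 < q) (hwp : w p = -a) (hwq : w q = a - 1) :
    Set.EqOn (w ∘ signedTransposition p (-q)) (raisePair a ∘ w) (Set.Ici 1) := by
  intro m hm
  rw [Set.mem_Ici] at hm
  have ht : signedTransposition p (-q) m = if m = p then -q else if m = q then -p else m := by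
    unfold signedTransposition
    split_ifs <;> omega
  rw [Function.comp_apply, Function.comp_apply, ht]
  split_ifs with hmp hmq
  · rw [hmp, hw.2.1, hwq, hwp, raisePair_neg_self]
  · rw [hmq, hw.2.1, hwp, hwq, raisePair_sub_one, neg_neg]
  · refine (raisePair_of_ne ?_ ?_).symm
    · rw [← hwp]
      exact hw.1.1.ne hmp
    · rw [← hwq]
      exact hw.1.1.ne hmq

end SignedPerm

lemma Grassmannian.of_eqOn_comp {n k : ℕ} {w w' f : ℤ → ℤ} (hw : Grassmannian n k w)
    (hw' : SignedPerm n w') (heq : Set.EqOn w' (f ∘ w) (Set.Ici 1))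
    (hf : StrictMonoOn f (w '' Set.Ici 1)) (hf_pos : ∀ x, 0 < x → 0 < f x) :
    Grassmannian n k w' := by
  obtain ⟨-, hpos, hlow, hhigh⟩ := hw
  have hmono : ∀ i j : ℤ, 1 ≤ i → i < j → w i < w j → w' i < w' j := fun i j hi hij h => by
    rw [heq (Set.mem_Ici.2 hi), heq (Set.mem_Ici.2 (by omega))]
    exact hf ⟨i, hi, rfl⟩ ⟨j, Set.mem_Ici.2 (by omega), rfl⟩ h
  refine ⟨hw', fun i hi hik => ?_, fun i j hi hij hjk => ?_, fun i j hki hij hjn => ?_⟩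
  · rw [heq (Set.mem_Ici.2 hi)]
    exact hf_pos _ (hpos i hi hik)
  · exact hmono i j hi hij (hlow i j hi hij hjk)
  · exact hmono i j (by omega) hij (hhigh i j hki hij hjn)

lemma invCount_congr {n : ℕ} {w w' : ℤ → ℤ} (h : Set.EqOn w w' (Set.Icc 1 n)) :
    invCount n w = invCount n w' := by
  unfold invCount
  congr 1
  refine filter_congr fun x hx => ?_
  simp only [mem_product, mem_Icc] at hx
  rw [h (Set.mem_Icc.2 hx.1), h (Set.mem_Icc.2 hx.2)]

lemma len_congr {n : ℕ} {w w' : ℤ → ℤ} (h : Set.EqOn w w' (Set.Icc 1 n)) :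
    len n w = len n w' := by
  have hfilter : (Icc (1 : ℤ) n).filter (fun j => w j < 0) =
      (Icc (1 : ℤ) n).filter (fun j => w' j < 0) :=
    filter_congr fun j hj => by rw [h (by simpa using hj)]
  unfold len
  rw [invCount_congr h, hfilter]
  congr 1
  exact sum_congr rfl fun j hj => h (by simpa using (mem_filter.1 hj).1)

lemma invCount_comp {n : ℕ} {w f : ℤ → ℤ} (hf : StrictMonoOn f (w '' Set.Icc 1 n)) :
    invCount n (f ∘ w) = invCount n w := by
  unfold invCount
  congr 1
  refine filter_congr fun x hx => ?_
  simp only [mem_product, mem_Icc] at hx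
  simp only [Function.comp,
    hf.lt_iff_lt ⟨x.2, Set.mem_Icc.2 hx.2, rfl⟩ ⟨x.1, Set.mem_Icc.2 hx.1, rfl⟩]

lemma len_raisePair_comp {n : ℕ} {w : ℤ → ℤ} {a p q : ℤ} (hw : SignedPerm n w) (ha : 1 < a)
    (hp : p ∈ Icc (1 : ℤ) n) (hq : 0 < q) (hwp : w p = -a) (hwq : w q = a - 1) :
    len n (raisePair a ∘ w) + 1 = len n w := by
  rw [mem_Icc] at hp
  have hf : StrictMonoOn (raisePair a) (w '' Set.Icc 1 n) :=
    (strictMonoOn_raisePair hw (by omega) hq hwp hwq).mono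
      (Set.image_mono Set.Icc_subset_Ici_self)
  set F := (Icc (1 : ℤ) n).filter (fun j => w j < 0)
  have hfilter : (Icc (1 : ℤ) n).filter (fun j => raisePair a (w j) < 0) = F :=
    filter_congr fun j _ => raisePair_neg_iff ha (w j)
  have hpF : p ∈ F := mem_filter.2 ⟨mem_Icc.2 hp, by omega⟩
  have hrest : ∀ j ∈ F.erase p, raisePair a (w j) = w j := fun j hj => by
    obtain ⟨hjp, hjF⟩ := mem_erase.1 hj
    have hjneg : w j < 0 := (mem_filter.1 hjF).2
    exact raisePair_of_ne (fun h => hjp (hw.1.1 (h.trans hwp.symm))) (by omega)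
  have hsum : ∑ j ∈ F, raisePair a (w j) = ∑ j ∈ F, w j + 1 := by
    rw [← add_sum_erase F _ hpF, ← add_sum_erase F _ hpF, sum_congr rfl hrest, hwp,
      raisePair_neg_self]
    ring
  unfold len
  rw [invCount_comp hf]
  simp only [Function.comp, hfilter, hsum]
  ring

lemma Multiset.map_eq_cons_cons_erase_erase {α : Type*} [DecidableEq α] {M : Multiset α}
    {f : α → α} {x y : α} (hM : M.Nodup) (hx : x ∈ M) (hy : y ∈ M) (hxy : x ≠ y)
    (hf : ∀ z ∈ M, z ≠ x → z ≠ y → f z = z) :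
    M.map f = f x ::ₘ f y ::ₘ (M.erase x).erase y := by
  have hy' : y ∈ M.erase x := (Multiset.mem_erase_of_ne hxy.symm).2 hy
  have hrest : ((M.erase x).erase y).map f = (M.erase x).erase y := by
    refine (Multiset.map_congr rfl fun z hz => ?_).trans (Multiset.map_id' _)
    obtain ⟨hzy, hz'⟩ := ((hM.erase x).mem_erase_iff).1 hz
    obtain ⟨hzx, hzM⟩ := (hM.mem_erase_iff).1 hz'
    exact hf z hzM hzx hzy
  conv_lhs => rw [← Multiset.cons_erase hx, ← Multiset.cons_erase hy']
  rw [Multiset.map_cons, Multiset.map_cons, hrest]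

lemma entriesHigh_of_eqOn_raisePair_comp {n k : ℕ} {w w' : ℤ → ℤ} {a : ℤ}
    (hw : SignedPerm n w) (ha : 1 < a) (hna : (-a) ∈ entriesHigh n k w)
    (ha1 : (a - 1) ∈ entriesHigh n k w) (heq : Set.EqOn w' (raisePair a ∘ w) (Set.Ici 1)) :
    entriesHigh n k w' =
      a ::ₘ (-(a - 1)) ::ₘ (((entriesHigh n k w).erase (-a)).erase (a - 1)) := by
  have hmap : entriesHigh n k w' = (entriesHigh n k w).map (raisePair a) := by
    rw [entriesHigh, entriesHigh, Multiset.map_map]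
    refine Multiset.map_congr rfl fun m hm => heq (Set.mem_Ici.2 ?_)
    simp only [Finset.mem_val, mem_Icc] at hm
    omega
  have hnodup : (entriesHigh n k w).Nodup := (Finset.nodup _).map hw.1.1
  rw [hmap, Multiset.map_eq_cons_cons_erase_erase hnodup hna ha1 (by omega)
    fun z _ => raisePair_of_ne, raisePair_neg_self, raisePair_sub_one]
  exact Multiset.cons_swap _ _ _

theorem stmt_6_general (n k : ℕ) (w : ℤ → ℤ)
    (hw : Grassmannian n k w) (a : ℤ) (ha : 1 < a)
    (hna : (-a) ∈ entriesHigh n k w) (ha1 : (a - 1) ∈ entriesHigh n k w) :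
    ∃ w' : ℤ → ℤ, Grassmannian n k w' ∧
      entriesLow k w' = entriesLow k w ∧
      entriesHigh n k w' =
        a ::ₘ (-(a - 1)) ::ₘ (((entriesHigh n k w).erase (-a)).erase (a - 1)) ∧
      Covers n w w' := by
  obtain ⟨p, hp, hwp⟩ := Multiset.mem_map.1 hna
  obtain ⟨q, hq, hwq⟩ := Multiset.mem_map.1 ha1
  rw [Finset.mem_val, mem_Icc] at hp hq
  have hpq : p < q := by
    by_contra! hqp
    obtain rfl | hqp := hqp.eq_or_lt
    · omega
    · have := hw.2.2.2 q p (by omega) hqp hp.2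
      omega
  have habs : |-q| = q := by rw [abs_neg, abs_of_pos (by omega)]
  set t := signedTransposition p (-q)
  have heq := comp_signedTransposition_eqOn hw.1 (by omega) (by omega) hwp hwq
  have hfix : ∀ m ∈ Icc (1 : ℤ) k, (w ∘ t) m = w m := fun m hm => by
    rw [mem_Icc] at hm
    exact congrArg w (signedTransposition_apply_of_lt (by omega) (by omega) (by omega))
  refine ⟨w ∘ t, ?_, Multiset.map_congr rfl hfix,
    entriesHigh_of_eqOn_raisePair_comp hw.1 ha hna ha1 heq,
    t, isReflection_signedTransposition (by omega) (by omega) (by omega), rfl, ?_⟩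
  · exact hw.of_eqOn_comp (hw.1.comp (signedPerm_signedTransposition (by omega) (by omega)
      (by omega))) heq (strictMonoOn_raisePair hw.1 (by omega) (by omega) hwp hwq)
      fun x hx => hx.trans_le (le_raisePair a x)
  · rw [len_congr (heq.mono Set.Icc_subset_Ici_self)]
    exact (len_raisePair_comp hw.1 ha (mem_Icc.2 ⟨by omega, hp.2⟩) (by omega) hwp hwq).symm

/-- if `-a` and `a-1` (with `a > 1`) are entries of `w ∈ W_n^{(k)}` at
positions `> k`, then the permutation `w'` obtained by replacing them by `-(a-1)` and
`a` belongs to `W_n^{(k)}` and `w` covers `w'`. -/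
theorem stmt_6 (n k : ℕ) (hn : 1 ≤ n) (hk : k ≤ n) (w : ℤ → ℤ)
    (hw : Grassmannian n k w) (a : ℤ) (ha : 1 < a)
    (hna : (-a) ∈ entriesHigh n k w) (ha1 : (a - 1) ∈ entriesHigh n k w) :
    ∃ w' : ℤ → ℤ, Grassmannian n k w' ∧
      entriesLow k w' = entriesLow k w ∧
      entriesHigh n k w' =
        a ::ₘ (-(a - 1)) ::ₘ (((entriesHigh n k w).erase (-a)).erase (a - 1)) ∧
      Covers n w w' :=
  stmt_6_general n k w hw a ha hna ha1
end

section
/- Let w ∈ W_n^{(k)}, let a > b > 0 be integers such that a is an entry of w at a position ≤ k, b is an entry of w at a position > k, and every integer c with b < c < a satisfies that −c is an entry of w at a position > k (i.e., all intermediate values belong to the λ's). Then the permutation w' obtained from w by exchanging a and b (b among positions ≤ k, a among positions > k, each group reordered increasingly) belongs to W_n^{(k)}, and w covers w'. -/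
/-! The exchange is `w ↦ w ∘ t` for the reflection `t = (p q)(-p -q)`, where `p ≤ k < q` are the
positions of `a` and `b`. An entry `c` with `b < c < a` at a positive position `m` is impossible:
`-c` sits at a position `j > k`, so `c = w (-j)` and `m = -j < 0`. Hence every other entry of `w`
at a positive position lies below `b` or above `a`, so exchanging `a` and `b` preserves the
relative order of every pair of positions except `(p, q)`. Both blocks therefore stay increasing,
exactly one inversion is lost, and the sum of the negative entries, taken over the positions
`1, …, n` which `t` permutes, is unchanged: the length drops by one. -/

/-- The reflection `(p q)(-p -q)`, written exactly as in `IsReflection`. -/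
def transpPair (p q : ℤ) : ℤ → ℤ := fun m =>
  if m = p then q else if m = q then p else if m = -p then -q else if m = -q then -p else m

section transpPair

variable {p q : ℤ}

theorem transpPair_apply_left (p q : ℤ) : transpPair p q p = q := by
  simp [transpPair]

theorem transpPair_apply_right (hpq : p ≠ q) : transpPair p q q = p := by
  simp [transpPair, hpq.symm]

theorem transpPair_apply_of_pos (hp : 0 < p) (hq : 0 < q) {m : ℤ} (hm : 0 < m) (hmp : m ≠ p)
    (hmq : m ≠ q) : transpPair p q m = m := by
  unfold transpPair; split_ifs <;> omega

theorem transpPair_neg (hp : 0 < p) (hq : 0 < q) (m : ℤ) :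
    transpPair p q (-m) = -transpPair p q m := by
  unfold transpPair; split_ifs <;> omega

theorem transpPair_involutive (hp : 0 < p) (hq : 0 < q) : Function.Involutive (transpPair p q) := by
  intro m; unfold transpPair; split_ifs <;> omega

theorem transpPair_mem_Icc {n : ℤ} (hp : 1 ≤ p) (hqn : q ≤ n) (hpq : p < q) {m : ℤ}
    (hm : m ∈ Finset.Icc 1 n) : transpPair p q m ∈ Finset.Icc 1 n := by
  rw [Finset.mem_Icc] at hm ⊢; unfold transpPair; split_ifs <;> omega

theorem isReflection_transpPair {n : ℕ} (hp : 1 ≤ p) (hpq : p < q) (hqn : q ≤ n) :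
    IsReflection n (transpPair p q) :=
  Or.inl ⟨p, q, hp, by rwa [abs_of_pos (by omega)], by rwa [abs_of_pos (by omega)], rfl⟩

end transpPair

theorem SignedPerm.comp_transpPair {n : ℕ} {w : ℤ → ℤ} {p q : ℤ} (hw : SignedPerm n w)
    (hp : 0 < p) (hpq : p < q) (hqn : q ≤ n) : SignedPerm n (w ∘ transpPair p q) := by
  obtain ⟨hbij, hodd, hfix⟩ := hw
  refine ⟨hbij.comp (transpPair_involutive hp (by omega)).bijective, fun m => ?_, fun m hm => ?_⟩
  · simp only [Function.comp_apply, transpPair_neg hp (by omega : 0 < q), hodd]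
  · have : transpPair p q m = m := by unfold transpPair; split_ifs <;> grind
    simp only [Function.comp_apply, this, hfix m hm]

theorem SignedPerm.lt_or_lt_of_forall_neg_mem_entriesHigh {n k : ℕ} {w : ℤ → ℤ} {p q : ℤ}
    (hw : SignedPerm n w) (hmid : ∀ c : ℤ, w q < c → c < w p → (-c) ∈ entriesHigh n k w)
    {m : ℤ} (hm : 0 < m) (hmp : m ≠ p) (hmq : m ≠ q) : w m < w q ∨ w p < w m := by
  have hp : w m ≠ w p := hw.1.injective.ne hmp
  have hq : w m ≠ w q := hw.1.injective.ne hmq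
  by_contra! hbetween
  obtain ⟨j, hj, hwj⟩ := Multiset.mem_map.mp (hmid (w m) (by omega) (by omega))
  rw [Finset.mem_val, Finset.mem_Icc] at hj
  have : -j = m := hw.1.injective (by rw [hw.2.1, hwj, neg_neg])
  omega

theorem Finset.val_map_eq_cons_erase {ι α : Type*} [DecidableEq α] {s : Finset ι} {p : ι}
    (hp : p ∈ s) {f g : ι → α} (hfg : ∀ m ∈ s, m ≠ p → g m = f m) :
    s.val.map g = g p ::ₘ (s.val.map f).erase (f p) := by
  classical
  rw [← Multiset.cons_erase (s := s.val) hp, Multiset.map_cons, Multiset.map_cons,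
    Multiset.erase_cons_head]
  refine congrArg _ (Multiset.map_congr rfl fun m hm => ?_)
  rw [s.nodup.mem_erase_iff] at hm
  exact hfg m hm.2 hm.1

section exchange

variable {n k : ℕ} {w : ℤ → ℤ} {p q : ℤ}

theorem comp_transpPair_lt_comp_transpPair_iff (hp : 0 < p) (hpq : p < q)
    (hsep : ∀ m, 0 < m → m ≠ p → m ≠ q → w m < w q ∨ w p < w m) (hlt : w q < w p)
    {i j : ℤ} (hi : 0 < i) (hj : 0 < j) (hpq' : ¬(i = p ∧ j = q)) (hqp : ¬(i = q ∧ j = p)) :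
    (w ∘ transpPair p q) i < (w ∘ transpPair p q) j ↔ w i < w j := by
  have hcases : ∀ m, 0 < m →
      (m = p ∧ w m = w p ∧ w (transpPair p q m) = w q) ∨
      (m = q ∧ w m = w q ∧ w (transpPair p q m) = w p) ∨
      (m ≠ p ∧ m ≠ q ∧ w (transpPair p q m) = w m ∧ (w m < w q ∨ w p < w m)) := by
    intro m hm
    by_cases hmp : m = p
    · simp [hmp, transpPair_apply_left]
    by_cases hmq : m = q
    · simp [hmq, transpPair_apply_right (by omega : p ≠ q)]
    exact Or.inr <| Or.inr ⟨hmp, hmq, by rw [transpPair_apply_of_pos hp (by omega) hm hmp hmq],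
      hsep m hm hmp hmq⟩
  simp only [Function.comp_apply]
  rcases hcases i hi with ⟨_, _, _⟩ | ⟨_, _, _⟩ | ⟨_, _, _, _⟩ <;>
  rcases hcases j hj with ⟨_, _, _⟩ | ⟨_, _, _⟩ | ⟨_, _, _, _⟩ <;> omega

theorem Grassmannian.comp_transpPair (hw : Grassmannian n k w) (hp : 1 ≤ p) (hpk : p ≤ k)
    (hkq : k < q) (hqn : q ≤ n) (hq : 0 < w q) (hlt : w q < w p)
    (hsep : ∀ m, 0 < m → m ≠ p → m ≠ q → w m < w q ∨ w p < w m) :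
    Grassmannian n k (w ∘ transpPair p q) := by
  obtain ⟨hsp, hpos, hlo, hhi⟩ := hw
  have hord (i j : ℤ) (hi : 0 < i) (hij : i < j) (hne : ¬(i = p ∧ j = q)) :=
    comp_transpPair_lt_comp_transpPair_iff (w := w) (by omega) (by omega) hsep hlt hi
      (by omega : 0 < j) hne (by omega)
  refine ⟨hsp.comp_transpPair (by omega) (by omega) hqn, fun i hi hik => ?_,
    fun i j hi hij hjk => (hord i j (by omega) hij (by omega)).2 (hlo i j hi hij hjk),
    fun i j hki hij hjn => (hord i j (by omega) hij (by omega)).2 (hhi i j hki hij hjn)⟩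
  · by_cases hip : i = p
    · simpa [hip, transpPair_apply_left] using hq
    · rw [Function.comp_apply, transpPair_apply_of_pos (by omega) (by omega) (by omega) hip
        (by omega)]
      exact hpos i hi hik

theorem invCount_eq_invCount_comp_transpPair_add_one (hp : 1 ≤ p) (hpq : p < q) (hqn : q ≤ n)
    (hsep : ∀ m, 0 < m → m ≠ p → m ≠ q → w m < w q ∨ w p < w m) (hlt : w q < w p) :
    invCount n w = invCount n (w ∘ transpPair p q) + 1 := by
  have hl := transpPair_apply_left p q
  have hr := transpPair_apply_right (by omega : p ≠ q)
  unfold invCount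
  rw [← Finset.card_insert_of_notMem (a := (p, q))]
  · congr 1
    ext ⟨i, j⟩
    simp only [Finset.mem_insert, Finset.mem_filter, Finset.mem_product, Finset.mem_Icc,
      Prod.mk.injEq]
    by_cases hij : i = p ∧ j = q
    · obtain ⟨rfl, rfl⟩ := hij
      simp only [true_and, true_or, iff_true]
      omega
    · rw [or_iff_right hij]
      refine and_congr_right fun hmem => and_congr_right fun hlt_ij => ?_
      exact (comp_transpPair_lt_comp_transpPair_iff (by omega) hpq hsep hlt (by omega)
        (by omega) (by omega) (by tauto)).symm
  · simp only [Finset.mem_filter, Function.comp_apply, hl, hr, not_and, not_lt]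
    omega

theorem sum_neg_comp_transpPair (hp : 1 ≤ p) (hpq : p < q) (hqn : q ≤ n) :
    ∑ j ∈ (Finset.Icc (1 : ℤ) n).filter (fun j => (w ∘ transpPair p q) j < 0),
      (w ∘ transpPair p q) j =
    ∑ j ∈ (Finset.Icc (1 : ℤ) n).filter (fun j => w j < 0), w j := by
  have hinv := transpPair_involutive (p := p) (q := q) (by omega) (by omega)
  refine Finset.sum_nbij' (transpPair p q) (transpPair p q) ?_ ?_ (fun m _ => hinv m)
    (fun m _ => hinv m) (fun _ _ => rfl)
  all_goals
    intro m hm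
    rw [Finset.mem_filter] at hm ⊢
    exact ⟨transpPair_mem_Icc hp hqn hpq hm.1,
      by simpa only [Function.comp_apply, hinv m] using hm.2⟩

theorem len_eq_len_comp_transpPair_add_one (hp : 1 ≤ p) (hpq : p < q) (hqn : q ≤ n)
    (hsep : ∀ m, 0 < m → m ≠ p → m ≠ q → w m < w q ∨ w p < w m) (hlt : w q < w p) :
    len n w = len n (w ∘ transpPair p q) + 1 := by
  rw [len, len, invCount_eq_invCount_comp_transpPair_add_one hp hpq hqn hsep hlt,
    sum_neg_comp_transpPair hp hpq hqn]
  push_cast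
  ring

theorem entriesLow_comp_transpPair (hp : 1 ≤ p) (hpk : p ≤ k) (hkq : k < q) :
    entriesLow k (w ∘ transpPair p q) = w q ::ₘ (entriesLow k w).erase (w p) := by
  refine (Finset.val_map_eq_cons_erase (f := w) (Finset.mem_Icc.2 ⟨hp, hpk⟩)
    fun m hm hmp => ?_).trans ?_
  · rw [Finset.mem_Icc] at hm
    exact congrArg w (transpPair_apply_of_pos (by omega) (by omega) (by omega) hmp (by omega))
  · rw [Function.comp_apply, transpPair_apply_left]; rfl

theorem entriesHigh_comp_transpPair (hp : 0 < p) (hpk : p ≤ k) (hkq : k < q) (hqn : q ≤ n) :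
    entriesHigh n k (w ∘ transpPair p q) = w p ::ₘ (entriesHigh n k w).erase (w q) := by
  refine (Finset.val_map_eq_cons_erase (f := w) (Finset.mem_Icc.2 ⟨by omega, hqn⟩)
    fun m hm hmq => ?_).trans ?_
  · rw [Finset.mem_Icc] at hm
    exact congrArg w (transpPair_apply_of_pos hp (by omega) (by omega) (by omega) hmq)
  · rw [Function.comp_apply, transpPair_apply_right (by omega)]; rfl

end exchange

theorem stmt_7_general (n k : ℕ) (w : ℤ → ℤ)
    (hw : Grassmannian n k w) (a b : ℤ) (hb : 0 < b) (hba : b < a)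
    (ha : a ∈ entriesLow k w) (hbv : b ∈ entriesHigh n k w)
    (hmid : ∀ c : ℤ, b < c → c < a → (-c) ∈ entriesHigh n k w) :
    ∃ w' : ℤ → ℤ, Grassmannian n k w' ∧
      entriesLow k w' = b ::ₘ (entriesLow k w).erase a ∧
      entriesHigh n k w' = a ::ₘ (entriesHigh n k w).erase b ∧
      Covers n w w' := by
  obtain ⟨p, hp, rfl⟩ := Multiset.mem_map.mp ha
  obtain ⟨q, hq, rfl⟩ := Multiset.mem_map.mp hbv
  have hpk := Finset.mem_Icc.1 (Finset.mem_val.mp hp)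
  have hqn := Finset.mem_Icc.1 (Finset.mem_val.mp hq)
  have hsep : ∀ m, 0 < m → m ≠ p → m ≠ q → w m < w q ∨ w p < w m :=
    fun m hm => hw.1.lt_or_lt_of_forall_neg_mem_entriesHigh hmid hm
  exact ⟨w ∘ transpPair p q,
    hw.comp_transpPair hpk.1 hpk.2 (by omega) hqn.2 hb hba hsep,
    entriesLow_comp_transpPair hpk.1 hpk.2 (by omega),
    entriesHigh_comp_transpPair (by omega) hpk.2 (by omega) hqn.2,
    transpPair p q, isReflection_transpPair hpk.1 (by omega) hqn.2, rfl,
    len_eq_len_comp_transpPair_add_one hpk.1 (by omega) hqn.2 hsep hba⟩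

/-- if `a` is an entry of `w` at a position `≤ k`, `b` is an entry at a
position `> k`, `a > b > 0`, and every `c` with `b < c < a` satisfies that `-c` is an
entry of `w` at a position `> k`, then the permutation `w'` obtained by exchanging
`a` and `b` belongs to `W_n^{(k)}` and `w` covers `w'`. -/
theorem stmt_7 (n k : ℕ) (hn : 1 ≤ n) (hk : k ≤ n) (w : ℤ → ℤ)
    (hw : Grassmannian n k w) (a b : ℤ) (hb : 0 < b) (hba : b < a)
    (ha : a ∈ entriesLow k w) (hbv : b ∈ entriesHigh n k w)
    (hmid : ∀ c : ℤ, b < c → c < a → (-c) ∈ entriesHigh n k w) :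
    ∃ w' : ℤ → ℤ, Grassmannian n k w' ∧
      entriesLow k w' = b ::ₘ (entriesLow k w).erase a ∧
      entriesHigh n k w' = a ::ₘ (entriesHigh n k w).erase b ∧
      Covers n w w' :=
  stmt_7_general n k w hw a b hb hba ha hbv hmid
end

section
/- Let w ∈ W_n^{(k)}, let a > 0 be an entry such that −a is an entry of w at a position > k, and suppose w' ∈ W_n^{(k)} has the same multiset of entries as w on positions ≤ k and on positions > k, except that −a is replaced by a among positions > k. Let p = #{i ∈ [1,k] : w(i) < a}. Then ℓ(w) = ℓ(w') + a + p. -/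
/-!
For a `k`-Grassmannian `w`, an inversion `i < j`, `w i > w j` must have `i ≤ k < j`, and negative
entries occur only at positions `> k`. Hence `ℓ(w)` depends only on the multisets `L` and `H` of
entries at positions `≤ k` and `> k`: it is `∑_{v ∈ L} #{x ∈ H : x < v} - ∑_{x ∈ H, x < 0} x`.
Replacing `-a` by `a` in `H` lowers the second sum by `a`, and lowers the count of the positive
entry `v ∈ L` by one exactly when `v ≤ a`; since `a` is a high entry of `w'`, `v ≠ a`.
-/

lemma card_filter_eq_countP_map {α β : Type*} (s : Finset α) (u : α → β) (p : β → Prop)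
    [DecidablePred p] :
    (s.filter fun i => p (u i)).card = (s.val.map u).countP p := by
  rw [Multiset.countP_eq_card_filter, Multiset.filter_map, Multiset.card_map]
  rfl

def lenOfEntries (L H : Multiset ℤ) : ℤ :=
  ((L.map fun v => H.countP (· < v)).sum : ℕ) - (H.filter (· < 0)).sum

lemma lenOfEntries_neg_cons {L : Multiset ℤ} (hL : ∀ v ∈ L, 0 < v) (H : Multiset ℤ) {a : ℤ}
    (ha : 0 ≤ a) :
    lenOfEntries L (-a ::ₘ H) = lenOfEntries L (a ::ₘ H) + a + L.countP (· ≤ a) := by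
  have hinv : (L.map fun v => (-a ::ₘ H).countP (· < v)).sum
      = (L.map fun v => (a ::ₘ H).countP (· < v)).sum + L.countP (· ≤ a) := by
    induction L using Multiset.induction with
    | empty => simp
    | cons v L ih =>
      have hv : 0 < v := hL v (Multiset.mem_cons_self v L)
      rw [Multiset.map_cons, Multiset.map_cons, Multiset.sum_cons, Multiset.sum_cons,
        ih fun x hx => hL x (Multiset.mem_cons_of_mem hx), Multiset.countP_cons,
        Multiset.countP_cons, Multiset.countP_cons]
      split_ifs <;> omega
  have hneg : ((-a ::ₘ H).filter (· < 0)).sum = ((a ::ₘ H).filter (· < 0)).sum - a := by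
    rcases ha.eq_or_lt with rfl | ha
    · simp
    · rw [Multiset.filter_cons_of_pos _ (by omega), Multiset.filter_cons_of_neg _ (by omega),
        Multiset.sum_cons]
      ring
  unfold lenOfEntries
  rw [hinv, hneg]
  push_cast
  ring

section Grassmannian

variable {n k : ℕ} {u : ℤ → ℤ}

lemma invCount_eq_sum_countP (hu : Grassmannian n k u) :
    invCount n u = ((entriesLow k u).map fun v => (entriesHigh n k u).countP (· < v)).sum := by
  obtain ⟨-, -, hlo, hhi⟩ := hu
  have hpairs : ((Finset.Icc 1 (n : ℤ) ×ˢ Finset.Icc 1 (n : ℤ)).filter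
      fun p => p.1 < p.2 ∧ u p.2 < u p.1)
      = (Finset.Icc 1 (k : ℤ) ×ˢ Finset.Icc ((k : ℤ) + 1) n).filter fun p => u p.2 < u p.1 := by
    ext ⟨i, j⟩
    simp only [Finset.mem_filter, Finset.mem_product, Finset.mem_Icc]
    constructor
    · rintro ⟨⟨⟨hi1, -⟩, -, hjn⟩, hij, hinv⟩
      have hjk : (k : ℤ) < j := by
        by_contra h
        exact absurd (hlo i j hi1 hij (by omega)) (by omega)
      have hik : i ≤ k := by
        by_contra h
        exact absurd (hhi i j (by omega) hij hjn) (by omega)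
      exact ⟨⟨⟨hi1, hik⟩, hjk, hjn⟩, hinv⟩
    · rintro ⟨⟨⟨hi1, hik⟩, hjk, hjn⟩, hinv⟩
      exact ⟨⟨⟨hi1, by omega⟩, by omega, hjn⟩, by omega, hinv⟩
  rw [invCount, hpairs, Finset.card_filter, Finset.sum_product, entriesLow, Multiset.map_map]
  refine Finset.sum_congr rfl fun i _ => ?_
  rw [← Finset.card_filter]
  exact card_filter_eq_countP_map _ u (· < u i)

lemma sum_neg_eq_sum_neg_entriesHigh (hu : Grassmannian n k u) :
    ∑ j ∈ (Finset.Icc 1 (n : ℤ)).filter (fun j => u j < 0), u j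
      = ((entriesHigh n k u).filter (· < 0)).sum := by
  obtain ⟨-, hpos, -, -⟩ := hu
  have hneg : (Finset.Icc 1 (n : ℤ)).filter (fun j => u j < 0)
      = (Finset.Icc ((k : ℤ) + 1) n).filter fun j => u j < 0 := by
    ext j
    simp only [Finset.mem_filter, Finset.mem_Icc]
    constructor
    · rintro ⟨⟨hj1, hjn⟩, hj⟩
      refine ⟨⟨?_, hjn⟩, hj⟩
      by_contra h
      exact absurd (hpos j hj1 (by omega)) (by omega)
    · rintro ⟨⟨hjk, hjn⟩, hj⟩
      exact ⟨⟨by omega, hjn⟩, hj⟩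
  rw [hneg, entriesHigh, Multiset.filter_map]
  rfl

lemma len_eq_lenOfEntries (hu : Grassmannian n k u) :
    len n u = lenOfEntries (entriesLow k u) (entriesHigh n k u) := by
  rw [len, lenOfEntries, invCount_eq_sum_countP hu, sum_neg_eq_sum_neg_entriesHigh hu]

lemma pos_of_mem_entriesLow (hu : Grassmannian n k u) {v : ℤ} (hv : v ∈ entriesLow k u) :
    0 < v := by
  obtain ⟨i, hi, rfl⟩ := Multiset.mem_map.mp hv
  rw [Finset.mem_val, Finset.mem_Icc] at hi
  exact hu.2.1 i hi.1 hi.2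

end Grassmannian

lemma notMem_entriesHigh_of_mem_entriesLow {n k : ℕ} {u : ℤ → ℤ} (hu : u.Injective) {v : ℤ}
    (hv : v ∈ entriesLow k u) : v ∉ entriesHigh n k u := by
  intro hv'
  obtain ⟨i, hi, rfl⟩ := Multiset.mem_map.mp hv
  obtain ⟨j, hj, hji⟩ := Multiset.mem_map.mp hv'
  rw [Finset.mem_val, Finset.mem_Icc] at hi hj
  have := hu hji
  omega

theorem stmt_10_general (n k : ℕ) (w w' : ℤ → ℤ)
    (hw : Grassmannian n k w) (hw' : Grassmannian n k w')
    (a : ℤ) (ha : 0 < a) (hna : (-a) ∈ entriesHigh n k w)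
    (hlow : entriesLow k w' = entriesLow k w)
    (hhigh : entriesHigh n k w' = a ::ₘ (entriesHigh n k w).erase (-a)) :
    len n w = len n w' + a +
      (((Finset.Icc (1 : ℤ) (k : ℤ)).filter (fun i => w i < a)).card : ℤ) := by
  have haL : a ∉ entriesLow k w := fun h =>
    notMem_entriesHigh_of_mem_entriesLow hw'.1.1.1 (hlow ▸ h)
      (hhigh ▸ Multiset.mem_cons_self a _)
  have hp : ((Finset.Icc (1 : ℤ) k).filter fun i => w i < a).card
      = (entriesLow k w).countP (· ≤ a) := by
    rw [card_filter_eq_countP_map _ w (· < a)]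
    exact Multiset.countP_congr rfl fun v hv =>
      propext <| lt_iff_le_and_ne.trans (and_iff_left fun (h : v = a) => haL (h ▸ hv))
  rw [len_eq_lenOfEntries hw, len_eq_lenOfEntries hw', hlow, hhigh, hp,
    ← Multiset.cons_erase hna, Multiset.erase_cons_head]
  exact lenOfEntries_neg_cons (fun v => pos_of_mem_entriesLow hw) _ ha.le

/-- if `-a` (with `a > 0`) is an entry of `w` at a position `> k` and
`w' ∈ W_n^{(k)}` is obtained from `w` by replacing `-a` by `a` among positions `> k`,
then `ℓ(w) = ℓ(w') + a + p` where `p = #{i ∈ [1,k] : w i < a}`. -/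
theorem stmt_10 (n k : ℕ) (hn : 1 ≤ n) (hk : k ≤ n) (w w' : ℤ → ℤ)
    (hw : Grassmannian n k w) (hw' : Grassmannian n k w')
    (a : ℤ) (ha : 0 < a) (hna : (-a) ∈ entriesHigh n k w)
    (hlow : entriesLow k w' = entriesLow k w)
    (hhigh : entriesHigh n k w' = a ::ₘ (entriesHigh n k w).erase (-a)) :
    len n w = len n w' + a +
      (((Finset.Icc (1 : ℤ) (k : ℤ)).filter (fun i => w i < a)).card : ℤ) :=
  stmt_10_general n k w w' hw hw' a ha hna hlow hhigh
end

section
/- Let w, w' ∈ W_n^{(k)} be such that w covers w'. Then the pair (w,w') is of type B1 if and only if the dual pair ((w')∨, w∨) is of type B1. -/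
section LongestElement

variable {n k : ℕ}

lemma w0_of_le {i : ℤ} (h₁ : 1 ≤ i) (h₂ : i ≤ k) : w0 n k i = i := by
  simp only [w0]; split_ifs <;> omega

lemma w0_of_lt {i : ℤ} (h₁ : k < i) (h₂ : i ≤ n) : w0 n k i = -(n + k + 1 - i) := by
  simp only [w0]; split_ifs <;> omega

lemma w0_of_lt_abs {i : ℤ} (h : n < |i|) : w0 n k i = i := by
  rw [lt_abs] at h
  simp only [w0]; split_ifs <;> omega

lemma w0_neg (i : ℤ) : w0 n k (-i) = -w0 n k i := by
  simp only [w0]; split_ifs <;> omega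

lemma w0_involutive : Function.Involutive (w0 n k) := by
  intro i
  simp only [w0]; split_ifs <;> omega

lemma comp_w0_comp_w0 (w : ℤ → ℤ) : (w ∘ w0 n k) ∘ w0 n k = w := by
  rw [Function.comp_assoc, w0_involutive.comp_self, Function.comp_id]

theorem Grassmannian.comp_w0 {w : ℤ → ℤ} (hw : Grassmannian n k w) :
    Grassmannian n k (w ∘ w0 n k) := by
  obtain ⟨⟨hbij, hodd, hfix⟩, hpos, hlow, hhigh⟩ := hw
  refine ⟨⟨hbij.comp w0_involutive.bijective, fun i => ?_, fun i hi => ?_⟩,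
    fun i h₁ h₂ => ?_, fun i j h₁ h₂ h₃ => ?_, fun i j h₁ h₂ h₃ => ?_⟩
  · simp only [Function.comp_apply, w0_neg, hodd]
  · simp only [Function.comp_apply, w0_of_lt_abs hi, hfix i hi]
  · simpa only [Function.comp_apply, w0_of_le h₁ h₂] using hpos i h₁ h₂
  · simpa only [Function.comp_apply, w0_of_le h₁ (h₂.trans_le h₃).le,
      w0_of_le (h₁.trans h₂.le) h₃] using hlow i j h₁ h₂ h₃
  · simp only [Function.comp_apply, w0_of_lt h₁ (h₂.le.trans h₃),
      w0_of_lt (h₁.trans h₂) h₃, hodd, neg_lt_neg_iff]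
    exact hhigh _ _ (by omega) (by omega) (by omega)

end LongestElement

lemma Int.map_sub_Icc_val (a b : ℤ) :
    (Finset.Icc a b).val.map (fun i => a + b - i) = (Finset.Icc a b).val := by
  rw [← Finset.image_val_of_injOn (fun x _ y _ h => by simpa using h)]
  congr 1
  ext x
  simp only [Finset.mem_image, Finset.mem_Icc]
  exact ⟨by rintro ⟨y, hy, rfl⟩; omega, fun hx => ⟨a + b - x, by omega, by omega⟩⟩

lemma entriesLow_comp_w0 (n k : ℕ) (w : ℤ → ℤ) :
    entriesLow k (w ∘ w0 n k) = entriesLow k w := by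
  refine Multiset.map_congr rfl fun i hi => ?_
  rw [Finset.mem_val, Finset.mem_Icc] at hi
  simp only [Function.comp_apply, w0_of_le hi.1 hi.2]

lemma entriesHigh_comp_w0 (n k : ℕ) {w : ℤ → ℤ} (hw : ∀ i, w (-i) = -w i) :
    entriesHigh n k (w ∘ w0 n k) = (entriesHigh n k w).map Neg.neg := by
  unfold entriesHigh
  conv_rhs => rw [← Int.map_sub_Icc_val, Multiset.map_map, Multiset.map_map]
  refine Multiset.map_congr rfl fun i hi => ?_
  rw [Finset.mem_val, Finset.mem_Icc] at hi
  simp only [Function.comp_apply, w0_of_lt (by omega : (k : ℤ) < i) hi.2, hw]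
  ring_nf

theorem Multiset.map_neg_of_eq_cons_erase {α : Type*} [DecidableEq α] [InvolutiveNeg α]
    {a : α} {s t : Multiset α} (hs : -a ∈ s) (ht : t = a ::ₘ s.erase (-a)) :
    -a ∈ t.map Neg.neg ∧ s.map Neg.neg = a ::ₘ (t.map Neg.neg).erase (-a) := by
  subst ht
  rw [Multiset.map_cons, Multiset.erase_cons_head,
    Multiset.map_erase _ neg_injective, neg_neg, Multiset.cons_erase]
  · exact ⟨Multiset.mem_cons_self _ _, rfl⟩
  · simpa using Multiset.mem_map_of_mem Neg.neg hs

theorem TypeB1.dual {n k : ℕ} {w w' : ℤ → ℤ} (h : TypeB1 n k w w') :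
    TypeB1 n k (w' ∘ w0 n k) (w ∘ w0 n k) := by
  obtain ⟨hw, hw', hmem, hlow, hhigh⟩ := h
  obtain ⟨hmem', hhigh'⟩ := Multiset.map_neg_of_eq_cons_erase hmem hhigh
  refine ⟨hw'.comp_w0, hw.comp_w0, ?_, ?_, ?_⟩
  · rwa [entriesHigh_comp_w0 n k hw'.1.2.1]
  · rw [entriesLow_comp_w0, entriesLow_comp_w0, hlow]
  · rwa [entriesHigh_comp_w0 n k hw.1.2.1, entriesHigh_comp_w0 n k hw'.1.2.1]

theorem stmt_16_general (n k : ℕ) (w w' : ℤ → ℤ) :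
    TypeB1 n k w w' ↔ TypeB1 n k (w' ∘ w0 n k) (w ∘ w0 n k) := by
  refine ⟨TypeB1.dual, fun h => ?_⟩
  simpa only [comp_w0_comp_w0] using h.dual

/-- if `w` covers `w'`, then `(w, w')` is of type B1 iff the dual pair
`((w')∨, w∨)` is of type B1. -/
theorem stmt_16 (n k : ℕ) (hn : 1 ≤ n) (hk : k ≤ n) (w w' : ℤ → ℤ)
    (hw : Grassmannian n k w) (hw' : Grassmannian n k w')
    (hcov : Covers n w w') :
    TypeB1 n k w w' ↔ TypeB1 n k (w' ∘ w0 n k) (w ∘ w0 n k) :=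
  stmt_16_general n k w w'
end
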